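/- If two bounded operators Q and P on a nonzero Hilbert space satisfy the canonical commutation relation [Q,P] = iℏ·I with ℏ ≠ 0, then a contradiction follows; equivalently, no pair of bounded operators satisfies [Q,P] = c·I for a nonzero scalar c. -/

import Mathlib

/-!
Wielandt's argument. From `[a, b] = c` with `c` central one gets
`[a, b ^ (n + 1)] = (n + 1) c b ^ n` by induction, so no power of `b` vanishes. Taking norms gives
`(n + 1) ‖c‖ ‖b ^ n‖ ≤ 2 ‖a‖ ‖b‖ ‖b ^ n‖`, i.e. `(n + 1) ‖c‖ ≤ 2 ‖a‖ ‖b‖` for every `n`,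
which is impossible for `c ≠ 0`.
-/

section Algebra

variable {K A : Type*} [Ring A] {a b : A} {c : K}

theorem mul_pow_succ_sub_pow_succ_mul [CommRing K] [Algebra K A] (h : a * b - b * a = c • 1)
    (n : ℕ) : a * b ^ (n + 1) - b ^ (n + 1) * a = ((n + 1) * c) • b ^ n := by
  induction n with
  | zero => simpa using h
  | succ n ih =>
    rw [Nat.cast_succ]
    calc a * b ^ (n + 2) - b ^ (n + 2) * a
        = (a * b ^ (n + 1) - b ^ (n + 1) * a) * b + b ^ (n + 1) * (a * b - b * a) := by
          noncomm_ring
      _ = ((n + 1 + 1) * c) • b ^ (n + 1) := by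
          rw [ih, h, smul_mul_assoc, ← pow_succ, mul_smul_one, ← add_smul]
          ring_nf

theorem pow_ne_zero_of_commutator_eq_smul_one [Field K] [CharZero K] [Algebra K A]
    [Nontrivial A] (h : a * b - b * a = c • 1) (hc : c ≠ 0) (n : ℕ) : b ^ n ≠ 0 := by
  induction n with
  | zero => simp
  | succ n ih =>
    intro hb
    have := mul_pow_succ_sub_pow_succ_mul h n
    rw [hb, mul_zero, zero_mul, sub_zero, eq_comm, smul_eq_zero] at this
    exact this.elim (mul_ne_zero n.cast_add_one_ne_zero hc) ih

end Algebra

section Normed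

variable {𝕜 A : Type*} [RCLike 𝕜] [NormedRing A] [NormedAlgebra 𝕜 A]

theorem norm_mul_sub_mul_le (a x : A) : ‖a * x - x * a‖ ≤ 2 * ‖a‖ * ‖x‖ := by
  calc ‖a * x - x * a‖ ≤ ‖a * x‖ + ‖x * a‖ := norm_sub_le _ _
    _ ≤ ‖a‖ * ‖x‖ + ‖x‖ * ‖a‖ := add_le_add (norm_mul_le _ _) (norm_mul_le _ _)
    _ = 2 * ‖a‖ * ‖x‖ := by ring

theorem succ_mul_norm_le_of_commutator_eq_smul_one [Nontrivial A] {a b : A} {c : 𝕜}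
    (h : a * b - b * a = c • 1) (hc : c ≠ 0) (n : ℕ) :
    (n + 1) * ‖c‖ ≤ 2 * ‖a‖ * ‖b‖ := by
  have hpos : 0 < ‖b ^ n‖ := norm_pos_iff.mpr (pow_ne_zero_of_commutator_eq_smul_one h hc n)
  refine le_of_mul_le_mul_right ?_ hpos
  calc (n + 1) * ‖c‖ * ‖b ^ n‖ = ‖((n + 1) * c) • b ^ n‖ := by
        rw [norm_smul, norm_mul]; norm_cast
    _ = ‖a * b ^ (n + 1) - b ^ (n + 1) * a‖ := by rw [mul_pow_succ_sub_pow_succ_mul h]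
    _ ≤ 2 * ‖a‖ * ‖b ^ (n + 1)‖ := norm_mul_sub_mul_le _ _
    _ ≤ 2 * ‖a‖ * (‖b‖ * ‖b ^ n‖) := by
        gcongr; rw [pow_succ']; exact norm_mul_le _ _
    _ = 2 * ‖a‖ * ‖b‖ * ‖b ^ n‖ := by ring

theorem commutator_ne_smul_one [Nontrivial A] (a b : A) {c : 𝕜} (hc : c ≠ 0) :
    a * b - b * a ≠ c • 1 := by
  intro h
  obtain ⟨n, hn⟩ := exists_nat_gt (2 * ‖a‖ * ‖b‖ / ‖c‖)
  have hbound := succ_mul_norm_le_of_commutator_eq_smul_one h hc n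
  rw [div_lt_iff₀ (norm_pos_iff.mpr hc)] at hn
  linarith [norm_nonneg c]

end Normed

/-- No pair of bounded operators on a nonzero Hilbert space satisfies the canonical
commutation relation `[Q,P] = c • I` with `c ≠ 0`. -/
theorem no_bounded_ccr {H : Type*} [NormedAddCommGroup H] [InnerProductSpace ℂ H]
    [Nontrivial H] (Q P : H →L[ℂ] H) (c : ℂ) (hc : c ≠ 0)
    (hcomm : Q * P - P * Q = c • (1 : H →L[ℂ] H)) : False :=
  commutator_ne_smul_one Q P hc hcomm
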